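/- Let f' : {0,1}^{2n-1} → {0,1} be a monotone Boolean function with Shapley value Φ_{f'}(1) = λ and λ ≥ 1/n. Let μ'(j) denote the fraction of size-j subsets of [2n-1]\{1} in the boundary B_{f'}(1). Then ∑_{0 ≤ i < j ≤ 2n-2} μ'(i,j) ≥ (λ²/2)·C(2n-1, 2), where μ'(i,j) is the fraction of nested pairs (S,T) with |S|=i, |T|=j, S ⊆ T ⊆ [2n-1]\{1} having both S and T in the boundary. -/

import Mathlib

open Finset

/-- A Boolean function on subsets of `Fin m` is monotone. -/
def MonotoneB {m : ℕ} (f : Finset (Fin m) → Bool) : Prop :=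
  ∀ S T : Finset (Fin m), S ⊆ T → f S = true → f T = true

/-- The boundary of coordinate `i`: sets `S` not containing `i` with
`f (S ∪ {i}) = 1` and `f S = 0`. -/
def boundary {m : ℕ} (f : Finset (Fin m) → Bool) (i : Fin m) : Finset (Finset (Fin m)) :=
  Finset.univ.filter (fun S => i ∉ S ∧ f (insert i S) = true ∧ f S = false)

/-- `mu f i j` : the fraction of size-`j` subsets of `[m] \ {i}` lying in the
boundary of coordinate `i`. -/
def mu {m : ℕ} (f : Finset (Fin m) → Bool) (i : Fin m) (j : ℕ) : ℚ :=
  (((boundary f i).filter (fun S => S.card = j)).card : ℚ) / (((m - 1).choose j : ℕ) : ℚ)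

/-- The Shapley value of coordinate `i` of `f` : the probability over a uniformly
random permutation `σ` that `i` is the pivotal coordinate on the increasing path
`∅ = P₀ ⊂ P₁ ⊂ ⋯ ⊂ Pₘ = univ` given by `σ`. -/
def shapley {m : ℕ} (f : Finset (Fin m) → Bool) (i : Fin m) : ℚ :=
  (((Finset.univ : Finset (Equiv.Perm (Fin m))).filter (fun σ =>
    ∃ j : Fin m, σ j = i ∧
      f ((Finset.univ.filter (fun k => k < j)).image (fun k => σ k)) = false ∧
      f ((Finset.univ.filter (fun k => k ≤ j)).image (fun k => σ k)) = true)).card : ℚ)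
    / ((Nat.factorial m : ℕ) : ℚ)

/-- `g` is the minor of `f` with respect to `π`. -/
def minorOf {m k : ℕ} (g : Finset (Fin k) → Bool) (f : Finset (Fin m) → Bool)
    (π : Fin m → Fin k) : Prop :=
  ∀ S : Finset (Fin k), g S = f (Finset.univ.filter (fun i => π i ∈ S))

/-- The minor of `f` with respect to `π`, as a function. -/
def minorFun {m k : ℕ} (f : Finset (Fin m) → Bool) (π : Fin m → Fin k) :
    Finset (Fin k) → Bool :=
  fun S => f (Finset.univ.filter (fun i => π i ∈ S))

/-- `muPair f i0 i j` : the fraction of nested pairs `(S,T)` with `|S| = i`,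
`|T| = j`, `S ⊆ T ⊆ [m] \ {i0}` such that both `S` and `T` lie in the boundary
of coordinate `i0`. -/
def muPair {m : ℕ} (f : Finset (Fin m) → Bool) (i0 : Fin m) (i j : ℕ) : ℚ :=
  (((Finset.univ : Finset (Finset (Fin m) × Finset (Fin m))).filter
    (fun P => P.1.card = i ∧ P.2.card = j ∧ P.1 ⊆ P.2 ∧
      P.1 ∈ boundary f i0 ∧ P.2 ∈ boundary f i0)).card : ℚ) /
    ((((m-1).choose i * ((m-1-i).choose (j-i)) : ℕ)) : ℚ)

/-!
Encode a maximal chain `∅ = C₀ ⊂ C₁ ⊂ ⋯ ⊂ C_{m-1} = [m] \ {i0}` by the permutation `σ` with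
`σ (m-1) = i0` and `C_j = σ {0, …, j-1}`; there are `(m-1)!` chains. Let `X` count the members
of a chain lying in the boundary `B` of `i0`. Counting the permutations that map prescribed
initial segments onto prescribed nested sets shows that, over a uniformly random chain,
`E[X] = m · Φ(i0) = λm` and `E[#{i < j | C_i, C_j ∈ B}] = ∑_{i<j} μ'(i,j)`. Since
`X² = X + 2 · #{i < j | C_i, C_j ∈ B}`, Cauchy–Schwarz gives `λ²m² ≤ λm + 2 ∑_{i<j} μ'(i,j)`,
and `λ(m+1) ≥ 2` (here `m = 2n-1` and `λ ≥ 1/n`) turns this into the bound `(λ²/2)·C(m,2)`.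
-/

open Equiv Nat

section PermCount
variable {α : Type*} [DecidableEq α]

theorem card_perm_comp_eq [Fintype α] {β : Type*} [Fintype β] [DecidableEq β] (κ κ' : α → β)
    (h : ∀ b, #{x | κ x = b} = #{x | κ' x = b}) :
    #{σ : Perm α | κ' ∘ σ = κ} = ∏ b, (#{x | κ x = b})! := by
  let τ : Perm α := ofFiberEquiv (f := κ) (g := κ') fun b =>
    Fintype.equivOfCardEq (by simpa only [Fintype.card_subtype] using h b)
  have hτ : κ' ∘ τ = κ := funext (ofFiberEquiv_map _)
  -- the solutions of `κ' ∘ σ = κ` form the coset `τ • stabilizer κ`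
  have e : {σ : Perm α // κ' ∘ σ = κ} ≃ {g : Perm α // κ ∘ g = κ} :=
    (Equiv.mulLeft τ⁻¹).subtypeEquiv fun σ => by
      rw [← hτ]
      simp [Function.comp_assoc, ← Perm.coe_mul]
  rw [← Fintype.card_subtype, Fintype.card_congr e, DomMulAct.stabilizer_card]
  simp only [Fintype.card_subtype]

variable {A B C S T U : Finset α}

def tripleLabel (A B C : Finset α) (x : α) : Fin 4 :=
  if x ∈ A then 0 else if x ∈ B then 1 else if x ∈ C then 2 else 3

lemma tripleLabel_eq_iff (hAB : A ⊆ B) (hBC : B ⊆ C) (hST : S ⊆ T) (hTU : T ⊆ U) {x y : α} :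
    tripleLabel S T U y = tripleLabel A B C x ↔
      (y ∈ S ↔ x ∈ A) ∧ (y ∈ T ↔ x ∈ B) ∧ (y ∈ U ↔ x ∈ C) := by
  unfold tripleLabel
  have := @hAB x; have := @hBC x; have := @hST y; have := @hTU y
  split_ifs <;> simp_all

lemma card_filter_tripleLabel_eq [Fintype α] (hAB : A ⊆ B) (hBC : B ⊆ C) (k : Fin 4) :
    #{x | tripleLabel A B C x = k} = ![#A, #B - #A, #C - #B, Fintype.card α - #C] k := by
  have hfiber : univ.filter (tripleLabel A B C · = k) = ![A, B \ A, C \ B, univ \ C] k := by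
    ext x
    have := @hAB x; have := @hBC x
    rw [mem_filter]
    fin_cases k <;> simp only [tripleLabel] <;> split_ifs <;> simp_all
  rw [hfiber]
  fin_cases k <;> simp [card_sdiff_of_subset, hAB, hBC]

lemma image_perm_eq_iff (σ : Perm α) : A.image σ = S ↔ ∀ x, σ x ∈ S ↔ x ∈ A := by
  constructor
  · rintro rfl x
    exact σ.injective.mem_finset_image
  · intro h
    ext y
    obtain ⟨x, rfl⟩ := σ.surjective y
    rw [σ.injective.mem_finset_image, h]

theorem card_perm_image_eq_three [Fintype α] (hAB : A ⊆ B) (hBC : B ⊆ C) (hST : S ⊆ T)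
    (hTU : T ⊆ U) (hS : #A = #S) (hT : #B = #T) (hU : #C = #U) :
    #{σ : Perm α | A.image σ = S ∧ B.image σ = T ∧ C.image σ = U} =
      (#A)! * (#B - #A)! * (#C - #B)! * (Fintype.card α - #C)! := by
  have hlabel (σ : Perm α) : (A.image σ = S ∧ B.image σ = T ∧ C.image σ = U) ↔
      tripleLabel S T U ∘ σ = tripleLabel A B C := by
    simp only [funext_iff, Function.comp_apply, tripleLabel_eq_iff hAB hBC hST hTU, forall_and,
      image_perm_eq_iff]
  rw [filter_congr fun σ _ => hlabel σ, card_perm_comp_eq _ _ fun k => by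
    rw [card_filter_tripleLabel_eq hAB hBC, card_filter_tripleLabel_eq hST hTU, hS, hT, hU]]
  simp [Fin.prod_univ_four, card_filter_tripleLabel_eq hAB hBC]

end PermCount

section InitSeg
variable {m : ℕ}

def initSeg (m j : ℕ) : Finset (Fin m) := {k | (k : ℕ) < j}

lemma card_initSeg {j : ℕ} (h : j ≤ m) : #(initSeg m j) = j := by
  simp [initSeg, Fin.card_filter_val_lt, h]

lemma initSeg_mono {i j : ℕ} (h : i ≤ j) : initSeg m i ⊆ initSeg m j := by
  intro k
  simp only [initSeg, mem_filter, mem_univ, true_and]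
  omega

lemma initSeg_succ (k : Fin m) : initSeg m (k + 1) = insert k (initSeg m k) := by
  ext l
  simp only [initSeg, mem_filter, mem_univ, true_and, mem_insert, Fin.ext_iff]
  omega

lemma filter_lt_eq_initSeg (j : Fin m) : ({k | k < j} : Finset (Fin m)) = initSeg m j := by
  ext k
  simp only [initSeg, mem_filter, mem_univ, true_and, Fin.lt_def]

lemma filter_le_eq_initSeg (j : Fin m) :
    ({k | k ≤ j} : Finset (Fin m)) = initSeg m (j + 1) := by
  ext k
  simp only [initSeg, mem_filter, mem_univ, true_and, Fin.le_def]
  omega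

def prefixImage (σ : Perm (Fin m)) (j : ℕ) : Finset (Fin m) := (initSeg m j).image σ

lemma card_prefixImage (σ : Perm (Fin m)) {j : ℕ} (h : j ≤ m) : #(prefixImage σ j) = j := by
  rw [prefixImage, card_image_of_injective _ σ.injective, card_initSeg h]

lemma prefixImage_zero (σ : Perm (Fin m)) : prefixImage σ 0 = ∅ := by
  simp [prefixImage, initSeg]

lemma prefixImage_succ (σ : Perm (Fin m)) (j : Fin m) :
    prefixImage σ (j + 1) = insert (σ j) (prefixImage σ j) := by
  rw [prefixImage, initSeg_succ, image_insert]
  rfl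

lemma apply_notMem_prefixImage (σ : Perm (Fin m)) (j : Fin m) : σ j ∉ prefixImage σ j := by
  simp [prefixImage, σ.injective.mem_finset_image, initSeg]

end InitSeg

section Chains
variable {m : ℕ} (i0 : Fin m)

def chains : Finset (Perm (Fin m)) := {σ | prefixImage σ (m - 1) = univ.erase i0}

lemma card_chains_filter_prefixImage_eq {S T : Finset (Fin m)} (hST : S ⊆ T) (hT : i0 ∉ T) :
    #{σ ∈ chains i0 | prefixImage σ #S = S ∧ prefixImage σ #T = T} =
      (#S)! * (#T - #S)! * (m - 1 - #T)! := by
  have hTm : #T < m := by simpa using card_lt_univ_of_notMem hT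
  have hSm : #S ≤ #T := card_le_card hST
  have hU : #(initSeg m (m - 1)) = #(univ.erase i0) := by
    rw [card_initSeg (by omega), card_erase_of_mem (mem_univ _), Finset.card_univ,
      Fintype.card_fin]
  calc #{σ ∈ chains i0 | prefixImage σ #S = S ∧ prefixImage σ #T = T}
      = #{σ : Perm (Fin m) | prefixImage σ #S = S ∧ prefixImage σ #T = T ∧
          prefixImage σ (m - 1) = univ.erase i0} := by
        congr 1
        ext σ
        simp only [chains, mem_filter, mem_univ, true_and]
        tauto
    _ = (#S)! * (#T - #S)! * (m - 1 - #T)! := by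
        unfold prefixImage
        rw [card_perm_image_eq_three (initSeg_mono hSm) (initSeg_mono (by omega)) hST
            (subset_erase.mpr ⟨subset_univ T, hT⟩) (card_initSeg (by omega))
            (card_initSeg hTm.le) hU,
          card_initSeg (by omega), card_initSeg hTm.le, card_initSeg (by omega),
          Fintype.card_fin, show m - (m - 1) = 1 by omega, factorial_one, mul_one]

lemma card_chains : #(chains i0) = (m - 1)! := by
  simpa [prefixImage_zero] using
    card_chains_filter_prefixImage_eq i0 (subset_refl ∅) (notMem_empty i0)

lemma prefixImage_symm_eq_iff (σ : Perm (Fin m)) {S : Finset (Fin m)} (hS : i0 ∉ S) :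
    prefixImage σ (σ.symm i0) = S ↔
      prefixImage σ #S = S ∧ prefixImage σ (#S + 1) = insert i0 S := by
  constructor
  · rintro rfl
    rw [card_prefixImage σ (σ.symm i0).is_lt.le, prefixImage_succ, apply_symm_apply]
    exact ⟨rfl, rfl⟩
  · rintro ⟨h, hsucc⟩
    let j : Fin m := ⟨#S, by simpa using card_lt_univ_of_notMem hS⟩
    have hinsert : insert i0 S = insert (σ j) S := by
      have := prefixImage_succ σ j
      rwa [show (j : ℕ) = #S from rfl, hsucc, h] at this
    have hj : σ j = i0 := by
      have hmem : σ j ∈ insert i0 S := hinsert ▸ mem_insert_self _ _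
      have hnotMem : σ j ∉ S := h ▸ apply_notMem_prefixImage σ j
      simpa [hnotMem] using hmem
    rw [← hj, symm_apply_apply]
    exact h

lemma card_prefixImage_symm_eq {S : Finset (Fin m)} (hS : i0 ∉ S) :
    #{σ : Perm (Fin m) | prefixImage σ (σ.symm i0) = S} = (#S)! * (m - 1 - #S)! := by
  have hSm : #S + 1 ≤ m := by simpa using card_lt_univ_of_notMem hS
  have hU : #(insert i0 S) = #S + 1 := card_insert_of_notMem hS
  rw [filter_congr fun σ _ =>
    (prefixImage_symm_eq_iff i0 σ hS).trans (and_congr_right' and_self_iff.symm)]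
  unfold prefixImage
  rw [card_perm_image_eq_three (initSeg_mono (Nat.le_add_right _ 1)) subset_rfl
      (subset_insert i0 S) subset_rfl (card_initSeg (by omega)) (by rw [card_initSeg hSm, hU])
      (by rw [card_initSeg hSm, hU]),
    card_initSeg (by omega), card_initSeg hSm, Nat.add_sub_cancel_left, Nat.sub_self,
    Fintype.card_fin, factorial_one, factorial_zero, show m - (#S + 1) = m - 1 - #S by omega]
  ring

variable (𝒮 : Finset (Finset (Fin m))) (h𝒮 : ∀ S ∈ 𝒮, i0 ∉ S)
include h𝒮

lemma card_filter_prefixImage_symm_mem :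
    #{σ : Perm (Fin m) | prefixImage σ (σ.symm i0) ∈ 𝒮} = ∑ S ∈ 𝒮, (#S)! * (m - 1 - #S)! := by
  rw [card_eq_sum_card_fiberwise (f := fun σ => prefixImage σ (σ.symm i0)) (t := 𝒮)
    fun σ hσ => mem_coe.mpr (mem_filter.mp hσ).2]
  refine sum_congr rfl fun S hS => ?_
  rw [filter_filter, ← card_prefixImage_symm_eq i0 (h𝒮 S hS)]
  congr 1
  exact filter_congr fun σ _ => and_iff_right_of_imp fun h => by simpa only [h] using hS

lemma card_chains_filter_prefixImage_mem {j : ℕ} (hj : j < m) :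
    #{σ ∈ chains i0 | prefixImage σ j ∈ 𝒮} = #{S ∈ 𝒮 | #S = j} * (j ! * (m - 1 - j)!) := by
  rw [card_eq_sum_card_fiberwise (f := (prefixImage · j)) (t := {S ∈ 𝒮 | #S = j})
      fun σ hσ => mem_filter.mpr ⟨(mem_filter.mp hσ).2, card_prefixImage σ hj.le⟩]
  refine sum_const_nat fun S hS => ?_
  obtain ⟨hS𝒮, rfl⟩ := mem_filter.mp hS
  have h := card_chains_filter_prefixImage_eq i0 (subset_refl S) (h𝒮 S hS𝒮)
  rw [Nat.sub_self, factorial_zero, mul_one] at h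
  rw [filter_filter, ← h]
  congr 1
  refine filter_congr fun σ _ => ?_
  constructor
  · rintro ⟨-, h⟩; exact ⟨h, h⟩
  · rintro ⟨h, -⟩; exact ⟨by simpa only [h] using hS𝒮, h⟩

lemma sum_card_chains_filter_prefixImage_mem :
    ∑ j ∈ range m, #{σ ∈ chains i0 | prefixImage σ j ∈ 𝒮} =
      ∑ S ∈ 𝒮, (#S)! * (m - 1 - #S)! := by
  have hcard (S) (hS : S ∈ 𝒮) : #S ∈ range m := by
    simpa using card_lt_univ_of_notMem (h𝒮 S hS)
  rw [← sum_fiberwise_of_maps_to' hcard fun j => j ! * (m - 1 - j)!]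
  refine sum_congr rfl fun j hj => ?_
  rw [card_chains_filter_prefixImage_mem i0 𝒮 h𝒮 (mem_range.mp hj), sum_const, smul_eq_mul]

lemma card_chains_filter_prefixImage_mem_pair {i j : ℕ} (hij : i ≤ j) (hj : j < m) :
    #{σ ∈ chains i0 | prefixImage σ i ∈ 𝒮 ∧ prefixImage σ j ∈ 𝒮} =
      #{P : Finset (Fin m) × Finset (Fin m) |
          #P.1 = i ∧ #P.2 = j ∧ P.1 ⊆ P.2 ∧ P.1 ∈ 𝒮 ∧ P.2 ∈ 𝒮} *
        (i ! * (j - i)! * (m - 1 - j)!) := by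
  rw [card_eq_sum_card_fiberwise (f := fun σ => (prefixImage σ i, prefixImage σ j))
      (t := {P : Finset (Fin m) × Finset (Fin m) |
          #P.1 = i ∧ #P.2 = j ∧ P.1 ⊆ P.2 ∧ P.1 ∈ 𝒮 ∧ P.2 ∈ 𝒮})
      fun σ hσ => by
        obtain ⟨-, hi𝒮, hj𝒮⟩ := mem_filter.mp hσ
        exact mem_filter.mpr ⟨mem_univ _, card_prefixImage σ (by omega),
          card_prefixImage σ hj.le, image_subset_image (initSeg_mono hij), hi𝒮, hj𝒮⟩]
  refine sum_const_nat fun P hP => ?_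
  obtain ⟨-, rfl, rfl, hST, hS𝒮, hT𝒮⟩ := mem_filter.mp hP
  rw [filter_filter, ← card_chains_filter_prefixImage_eq i0 hST (h𝒮 _ hT𝒮)]
  congr 1
  refine filter_congr fun σ _ => ?_
  rw [Prod.ext_iff]
  constructor
  · rintro ⟨-, h⟩; exact h
  · rintro ⟨h1, h2⟩; rw [h1, h2]; exact ⟨⟨hS𝒮, hT𝒮⟩, rfl, rfl⟩

end Chains

section Boundary
variable {m : ℕ} (f : Finset (Fin m) → Bool) (i0 : Fin m)

lemma mem_boundary {S : Finset (Fin m)} :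
    S ∈ boundary f i0 ↔ i0 ∉ S ∧ f (insert i0 S) = true ∧ f S = false := by
  simp only [boundary, mem_filter, mem_univ, true_and]

lemma notMem_of_mem_boundary : ∀ S ∈ boundary f i0, i0 ∉ S :=
  fun _ hS => ((mem_boundary f i0).mp hS).1

lemma pivotal_iff_prefixImage_mem_boundary (σ : Perm (Fin m)) :
    (∃ j : Fin m, σ j = i0 ∧
      f (({k | k < j} : Finset (Fin m)).image fun k => σ k) = false ∧
      f (({k | k ≤ j} : Finset (Fin m)).image fun k => σ k) = true) ↔
      prefixImage σ (σ.symm i0) ∈ boundary f i0 := by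
  have hlt (j : Fin m) :
      (({k | k < j} : Finset (Fin m)).image fun k => σ k) = prefixImage σ j := by
    rw [filter_lt_eq_initSeg]
    rfl
  have hle (j : Fin m) :
      (({k | k ≤ j} : Finset (Fin m)).image fun k => σ k) = insert (σ j) (prefixImage σ j) := by
    rw [filter_le_eq_initSeg, ← prefixImage_succ]
    rfl
  simp only [hlt, hle, mem_boundary]
  constructor
  · rintro ⟨j, rfl, hlt, hle⟩
    rw [symm_apply_apply]
    exact ⟨apply_notMem_prefixImage σ j, hle, hlt⟩
  · rintro ⟨-, hle, hlt⟩
    exact ⟨σ.symm i0, apply_symm_apply σ i0, hlt, by rwa [apply_symm_apply]⟩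

theorem shapley_mul_factorial :
    shapley f i0 * m ! = ∑ j ∈ range m, #{σ ∈ chains i0 | prefixImage σ j ∈ boundary f i0} := by
  simp only [shapley, pivotal_iff_prefixImage_mem_boundary]
  rw [div_mul_cancel₀ _ (by positivity),
    card_filter_prefixImage_symm_mem i0 _ (notMem_of_mem_boundary f i0),
    ← sum_card_chains_filter_prefixImage_mem i0 _ (notMem_of_mem_boundary f i0), Nat.cast_sum]

lemma choose_mul_choose_mul_factorial {n i j : ℕ} (hij : i ≤ j) (hjn : j ≤ n) :
    n.choose i * (n - i).choose (j - i) * (i ! * (j - i)! * (n - j)!) = n ! := by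
  have hi := choose_mul_factorial_mul_factorial (hij.trans hjn)
  have hj := choose_mul_factorial_mul_factorial (Nat.sub_le_sub_right hjn i)
  rw [show n - i - (j - i) = n - j by omega] at hj
  calc n.choose i * (n - i).choose (j - i) * (i ! * (j - i)! * (n - j)!)
      = n.choose i * i ! * ((n - i).choose (j - i) * (j - i)! * (n - j)!) := by ring
    _ = n ! := by rw [hj, hi]

theorem muPair_eq_card_chains_div {i j : ℕ} (hij : i ≤ j) (hj : j < m) :
    muPair f i0 i j =
      #{σ ∈ chains i0 | prefixImage σ i ∈ boundary f i0 ∧ prefixImage σ j ∈ boundary f i0} /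
        ((m - 1)! : ℚ) := by
  rw [muPair, card_chains_filter_prefixImage_mem_pair i0 _ (notMem_of_mem_boundary f i0) hij hj,
    ← choose_mul_choose_mul_factorial hij (by omega : j ≤ m - 1)]
  have : ((m - 1).choose i : ℚ) ≠ 0 := by exact_mod_cast (choose_pos (by omega)).ne'
  have : ((m - 1 - i).choose (j - i) : ℚ) ≠ 0 := by exact_mod_cast (choose_pos (by omega)).ne'
  push_cast
  field_simp

end Boundary

lemma sq_sum_range_eq {R : Type*} [CommSemiring R] (a : ℕ → R) (m : ℕ) :
    (∑ j ∈ range m, a j) ^ 2 =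
      ∑ j ∈ range m, a j ^ 2 + 2 * ∑ j ∈ range m, ∑ i ∈ range j, a i * a j := by
  induction m with
  | zero => simp
  | succ m ih =>
    simp only [sum_range_succ, add_sq, ih, ← sum_mul]
    ring

theorem shapley_sq_mul_choose_two_le_sum_muPair {m : ℕ} (f : Finset (Fin m) → Bool) (i0 : Fin m)
    (h : 2 ≤ shapley f i0 * (m + 1)) :
    shapley f i0 ^ 2 / 2 * (m.choose 2 : ℚ) ≤
      ∑ j ∈ range m, ∑ i ∈ range j, muPair f i0 i j := by
  set lam := shapley f i0
  set T := ∑ j ∈ range m, ∑ i ∈ range j, muPair f i0 i j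
  set N : ℚ := ((m - 1)! : ℚ) with hN
  let a (σ : Perm (Fin m)) (j : ℕ) : ℚ := if prefixImage σ j ∈ boundary f i0 then 1 else 0
  have hmean : ∑ σ ∈ chains i0, ∑ j ∈ range m, a σ j = lam * m * N := by
    rw [sum_comm]
    simp only [a, sum_boole]
    rw [← Nat.cast_sum, ← shapley_mul_factorial, hN, ← Nat.mul_factorial_pred i0.pos.ne']
    push_cast
    ring
  have hpairs : ∑ σ ∈ chains i0, ∑ j ∈ range m, ∑ i ∈ range j, a σ i * a σ j = N * T := by
    rw [sum_comm, mul_sum]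
    refine sum_congr rfl fun j hj => ?_
    rw [sum_comm, mul_sum]
    refine sum_congr rfl fun i hi => ?_
    simp only [a, ite_zero_mul_ite_zero, mul_one, sum_boole]
    rw [muPair_eq_card_chains_div f i0 (mem_range.mp hi).le (mem_range.mp hj),
      mul_div_cancel₀ _ (by positivity)]
  have hsq (σ : Perm (Fin m)) : (∑ j ∈ range m, a σ j) ^ 2 =
      ∑ j ∈ range m, a σ j + 2 * ∑ j ∈ range m, ∑ i ∈ range j, a σ i * a σ j := by
    rw [sq_sum_range_eq]
    congr 1
    exact sum_congr rfl fun j _ => by simp only [a]; split_ifs <;> norm_num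
  have hCS := sq_sum_le_card_mul_sum_sq (s := chains i0) (f := fun σ => ∑ j ∈ range m, a σ j)
  simp only [hsq, sum_add_distrib, ← mul_sum, hmean, hpairs, card_chains] at hCS
  have hNpos : 0 < N := by positivity
  have key : lam ^ 2 * m ^ 2 ≤ lam * m + 2 * T := by
    refine le_of_mul_le_mul_left ?_ (pow_pos hNpos 2)
    nlinarith
  have hlam : 0 ≤ lam := by nlinarith
  rw [Nat.cast_choose_two]
  nlinarith [mul_nonneg (mul_nonneg hlam (Nat.cast_nonneg m)) (sub_nonneg.mpr h)]

/-- If `Φ_{f'}(1) = λ ≥ 1/n`, then the sum of the nested-pair boundary fractions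
`μ'(i,j)` over `0 ≤ i < j ≤ 2n-2` is at least `(λ²/2)·C(2n-1,2)`. -/
theorem sum_muPair_lower (n : ℕ) (hn : 0 < n)
    (f' : Finset (Fin (2*n-1)) → Bool) (lam : ℚ)
    (hlam : shapley f' ⟨0, by omega⟩ = lam) (hln : 1 / (n : ℚ) ≤ lam) :
    lam ^ 2 / 2 * (((2*n-1).choose 2 : ℕ) : ℚ) ≤
      ∑ j ∈ Finset.range (2*n-1), ∑ i ∈ Finset.range j,
        muPair f' ⟨0, by omega⟩ i j := by
  subst hlam
  refine shapley_sq_mul_choose_two_le_sum_muPair f' _ ?_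
  rw [div_le_iff₀ (by positivity)] at hln
  have hm : ((2 * n - 1 : ℕ) : ℚ) + 1 = 2 * n := by
    rw [Nat.cast_sub (by omega)]
    push_cast
    ring
  rw [hm]
  linarith
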